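/- arXiv:0809.3644 — 2 statements merged into one kernel-verified Lean document; each statement's English description precedes it below -/
import Mathlib

section
/- Let X be a Banach space over 𝕜 (𝕜 = ℝ or ℂ) and let T be a bounded linear operator on X. Then Re V(T) ⊆ {0} (i.e., T is skew-hermitian) if and only if T belongs to the tangent space at the identity of the group of surjective isometries of X, i.e., there exists a map f : ℝ → L(X) such that f(t) is a bijective isometry of X for every t ∈ [-1,1], f(0) = Id, and f is differentiable at 0 (in operator norm) with derivative f'(0) = T. -/
def numericalRange (𝕜 : Type*) {X : Type*} [RCLike 𝕜] [NormedAddCommGroup X]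
    [NormedSpace 𝕜 X] (T : X →L[𝕜] X) : Set 𝕜 :=
  {lam | ∃ (x : X) (f : X →L[𝕜] 𝕜), ‖x‖ = 1 ∧ ‖f‖ = 1 ∧ f x = 1 ∧ lam = f (T x)}

/-!
If `Re V(T) = 0` and `φ` is a norming functional of `x`, then `Re φ (x + s T x) = ‖x‖`, so
`‖x‖ ≤ ‖x + s T x‖` for every real `s`; applying this to `x + s T x` and `-s` gives
`‖1 + s T‖ ≤ 1 + s² ‖T‖²`. As `exp (s T) = 1 + s T + o(s)`, writing `exp (t T) = exp (t T / n) ^ n`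
gives `‖exp (t T)‖ ≤ (1 + o(1 / n)) ^ n → 1`, so `t ↦ exp (t T)` is a group of surjective
isometries with derivative `T` at `0`.

Conversely, if `f` is such a curve and `φ` norms the unit vector `x`, then `t ↦ Re φ (f t x)` is
at most `1 = Re φ (f 0 x)` near `0`, so its derivative `Re φ (T x)` vanishes.
-/

open NormedSpace Filter Asymptotics Topology

theorem tendsto_nat_mul_apply_div_of_isLittleO {c : ℝ → ℝ} (hc : c =o[𝓝 0] fun s => s) (t : ℝ) :
    Tendsto (fun n : ℕ => n * c (t / n)) atTop (𝓝 0) := by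
  have h : (fun n : ℕ => c (t / n)) =o[atTop] fun n : ℕ => (n : ℝ)⁻¹ :=
    (hc.comp_tendsto (tendsto_const_div_atTop_nhds_zero_nat t)).trans_isBigO <|
      isBigO_of_le' (c := |t|) _ fun n => by simp [div_eq_mul_inv]
  simpa [div_eq_mul_inv, mul_comm] using h.tendsto_div_nhds_zero

section RealBanachAlgebra

variable {𝔸 : Type*} [NormedRing 𝔸] [NormedAlgebra ℝ 𝔸] [CompleteSpace 𝔸]

theorem norm_exp_smul_le_one_of_isLittleO {a : 𝔸} {c : ℝ → ℝ} (hc : c =o[𝓝 0] fun s => s)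
    (h : ∀ s : ℝ, ‖exp (s • a)‖ ≤ 1 + c s) (t : ℝ) : ‖exp (t • a)‖ ≤ 1 := by
  let : NormedAlgebra ℚ 𝔸 := .restrictScalars ℚ ℝ 𝔸
  have hpow (n : ℕ) (hn : 1 ≤ n) : ‖exp (t • a)‖ ≤ Real.exp (n * c (t / n)) := by
    have hsplit : exp (t • a) = exp ((t / n) • a) ^ n := by
      rw [← exp_nsmul, ← Nat.cast_smul_eq_nsmul ℝ, smul_smul,
        mul_div_cancel₀ _ (by positivity)]
    calc ‖exp (t • a)‖ ≤ ‖exp ((t / n) • a)‖ ^ n := hsplit ▸ norm_pow_le' _ hn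
      _ ≤ (1 + c (t / n)) ^ n := pow_le_pow_left₀ (norm_nonneg _) (h _) n
      _ ≤ Real.exp (c (t / n)) ^ n :=
        pow_le_pow_left₀ ((norm_nonneg _).trans (h _))
          (by linarith [Real.add_one_le_exp (c (t / n))]) n
      _ = Real.exp (n * c (t / n)) := (Real.exp_nat_mul _ _).symm
  have hlim : Tendsto (fun n : ℕ => Real.exp (n * c (t / n))) atTop (𝓝 1) := by
    simpa using (tendsto_nat_mul_apply_div_of_isLittleO hc t).rexp
  exact ge_of_tendsto hlim (eventually_atTop.2 ⟨1, hpow⟩)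

theorem isLittleO_exp_smul_sub_one_sub_smul (a : 𝔸) :
    (fun s : ℝ => exp (s • a) - 1 - s • a) =o[𝓝 0] fun s => s := by
  simpa using (hasDerivAt_exp_smul_const a (0 : ℝ)).isLittleO

theorem norm_exp_smul_le_one_of_norm_one_add_smul_le {a : 𝔸} {C : ℝ}
    (h : ∀ s : ℝ, ‖1 + s • a‖ ≤ 1 + C * s ^ 2) (t : ℝ) : ‖exp (t • a)‖ ≤ 1 := by
  refine norm_exp_smul_le_one_of_isLittleO
    (c := fun s => C * s ^ 2 + ‖exp (s • a) - 1 - s • a‖) ?_ (fun s => ?_) t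
  · exact ((isLittleO_pow_id one_lt_two).const_mul_left C).add
      (isLittleO_exp_smul_sub_one_sub_smul a).norm_left
  · calc ‖exp (s • a)‖ = ‖(1 + s • a) + (exp (s • a) - 1 - s • a)‖ := by abel_nf
      _ ≤ ‖1 + s • a‖ + ‖exp (s • a) - 1 - s • a‖ := norm_add_le _ _
      _ ≤ 1 + (C * s ^ 2 + ‖exp (s • a) - 1 - s • a‖) := by linarith [h s]

theorem exp_neg_mul_exp (a : 𝔸) : exp (-a) * exp a = 1 := by
  let : NormedAlgebra ℚ 𝔸 := .restrictScalars ℚ ℝ 𝔸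
  let := invertibleExp a
  rw [← invOf_exp, invOf_mul_self]

end RealBanachAlgebra

section Operators

variable {𝕜 X : Type*} [RCLike 𝕜] [NormedAddCommGroup X] [NormedSpace 𝕜 X]

theorem ContinuousLinearMap.norm_apply_eq_of_mul_eq_one {S S' : X →L[𝕜] X} (hS : ‖S‖ ≤ 1)
    (hS' : ‖S'‖ ≤ 1) (h : S' * S = 1) (x : X) : ‖S x‖ = ‖x‖ := by
  refine le_antisymm ((S.le_of_opNorm_le hS x).trans_eq (one_mul _)) ?_
  calc ‖x‖ = ‖(S' * S) x‖ := by rw [h]; rfl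
    _ ≤ ‖S x‖ := (S'.le_of_opNorm_le hS' (S x)).trans_eq (one_mul _)

variable (𝕜) in
def IsSkewHermitian (T : X →L[𝕜] X) : Prop :=
  ∀ lam ∈ numericalRange 𝕜 T, RCLike.re lam = 0

variable {T : X →L[𝕜] X}

theorem IsSkewHermitian.re_apply_eq_zero (hT : IsSkewHermitian 𝕜 T) {x : X} {φ : X →L[𝕜] 𝕜}
    (hφ : ‖φ‖ = 1) (hφx : φ x = ‖x‖) : RCLike.re (φ (T x)) = 0 := by
  rcases eq_or_ne x 0 with rfl | hx
  · simp
  have hx' : ‖x‖ ≠ 0 := norm_ne_zero_iff.mpr hx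
  have hmem : φ (T ((‖x‖⁻¹ : 𝕜) • x)) ∈ numericalRange 𝕜 T :=
    ⟨_, φ, by simp [norm_smul, hx'], hφ, by simp [hφx, hx'], rfl⟩
  simpa [hx'] using hT _ hmem

variable [NormedSpace ℝ X]

theorem IsSkewHermitian.norm_le_norm_add_smul (hT : IsSkewHermitian 𝕜 T) (x : X) (s : ℝ) :
    ‖x‖ ≤ ‖x + s • T x‖ := by
  rcases eq_or_ne x 0 with rfl | hx
  · simp
  obtain ⟨φ, hφ, hφx⟩ := exists_dual_vector 𝕜 x (norm_ne_zero_iff.mpr hx)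
  calc ‖x‖ = RCLike.re (φ (x + s • T x)) := by
        rw [map_add, ContinuousLinearMap.map_smul_of_tower, hφx, map_add, RCLike.smul_re,
          hT.re_apply_eq_zero hφ hφx]
        simp
    _ ≤ ‖φ (x + s • T x)‖ := RCLike.re_le_norm _
    _ ≤ ‖x + s • T x‖ := (φ.le_of_opNorm_le hφ.le _).trans_eq (one_mul _)

variable [SMulCommClass 𝕜 ℝ X]

theorem IsSkewHermitian.norm_one_add_smul_le (hT : IsSkewHermitian 𝕜 T) (s : ℝ) :
    ‖1 + s • T‖ ≤ 1 + ‖T‖ ^ 2 * s ^ 2 := by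
  refine ContinuousLinearMap.opNorm_le_bound _ (by positivity) fun y => ?_
  have hTT : ‖T (T y)‖ ≤ ‖T‖ ^ 2 * ‖y‖ := by
    simpa [pow_two, mul_assoc] using T.le_opNorm_of_le (T.le_opNorm y)
  calc ‖(1 + s • T) y‖ ≤ ‖(1 + s • T) y + (-s) • T ((1 + s • T) y)‖ :=
        hT.norm_le_norm_add_smul _ _
    _ = ‖y - s ^ 2 • T (T y)‖ := by congr 1; simp; module
    _ ≤ ‖y‖ + s ^ 2 * ‖T (T y)‖ :=
        (norm_sub_le _ _).trans_eq (by rw [norm_smul, Real.norm_of_nonneg (sq_nonneg s)])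
    _ ≤ (1 + ‖T‖ ^ 2 * s ^ 2) * ‖y‖ := by nlinarith [sq_nonneg s]

theorem IsSkewHermitian.of_hasDerivAt {f : ℝ → X →L[𝕜] X}
    (hf : ∀ᶠ t in 𝓝 0, ∀ x, ‖f t x‖ ≤ ‖x‖) (hf0 : f 0 = 1) (hfT : HasDerivAt f T 0) :
    IsSkewHermitian 𝕜 T := by
  rintro _ ⟨x, φ, hx, hφ, hφx, rfl⟩
  let L : (X →L[𝕜] X) →L[ℝ] ℝ :=
    RCLike.reCLM.comp ((φ.comp (ContinuousLinearMap.apply' X (.id 𝕜) x)).restrictScalars ℝ)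
  have hmax : IsLocalMax (fun t => L (f t)) 0 := by
    filter_upwards [hf] with t ht
    calc RCLike.re (φ (f t x)) ≤ ‖φ (f t x)‖ := RCLike.re_le_norm _
      _ ≤ ‖f t x‖ := (φ.le_of_opNorm_le hφ.le _).trans_eq (one_mul _)
      _ ≤ 1 := (ht x).trans hx.le
      _ = L (f 0) := by simp [L, hf0, hφx]
  exact hmax.hasDerivAt_eq_zero (L.hasFDerivAt.comp_hasDerivAt 0 hfT)

-- Only local: for `𝕜 = ℝ` it would compete with `ContinuousLinearMap.toNormedAlgebra`.
abbrev ContinuousLinearMap.normedAlgebraReal : NormedAlgebra ℝ (X →L[𝕜] X) where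
  __ := (inferInstance : Algebra ℝ (X →L[𝕜] X))
  norm_smul_le := norm_smul_le

attribute [local instance] ContinuousLinearMap.normedAlgebraReal

variable [CompleteSpace X]

theorem IsSkewHermitian.norm_exp_smul_le_one (hT : IsSkewHermitian 𝕜 T) (t : ℝ) :
    ‖exp (t • T)‖ ≤ 1 :=
  norm_exp_smul_le_one_of_norm_one_add_smul_le hT.norm_one_add_smul_le t

end Operators

/-- An operator `T` is skew-hermitian (`Re V(T) ⊆ {0}`) if and only if `T` is the derivative at
`0` of a curve `f : ℝ → L(X)` with `f 0 = Id` taking values in the surjective isometries of `X`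
on `[-1, 1]`; that is, iff `T` belongs to the tangent space at the identity of the group of
surjective isometries of `X`. -/
theorem skewHermitian_iff_mem_tangentSpace_of_isometryGroup
    {𝕜 X : Type*} [RCLike 𝕜] [NormedAddCommGroup X] [NormedSpace 𝕜 X] [CompleteSpace X]
    [NormedSpace ℝ X] [SMulCommClass 𝕜 ℝ X] (T : X →L[𝕜] X) :
    (∀ lam ∈ numericalRange 𝕜 T, RCLike.re lam = 0) ↔
      ∃ f : ℝ → (X →L[𝕜] X),
        (∀ t ∈ Set.Icc (-1 : ℝ) 1, Function.Bijective ⇑(f t) ∧ ∀ x : X, ‖f t x‖ = ‖x‖) ∧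
        f 0 = 1 ∧ HasDerivAt f T 0 := by
  let := ContinuousLinearMap.normedAlgebraReal (𝕜 := 𝕜) (X := X)
  refine ⟨fun (hT : IsSkewHermitian 𝕜 T) => ⟨fun t => exp (t • T), fun t _ => ?_, by simp, ?_⟩,
    fun ⟨f, hf, hf0, hfT⟩ => IsSkewHermitian.of_hasDerivAt ?_ hf0 hfT⟩
  · have hinv (s : ℝ) : exp ((-s) • T) * exp (s • T) = 1 := by
      rw [neg_smul]
      exact exp_neg_mul_exp _
    refine ⟨(ContinuousLinearEquiv.unitsEquiv 𝕜 X
        ⟨_, _, by simpa using hinv (-t), hinv t⟩).bijective,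
      ContinuousLinearMap.norm_apply_eq_of_mul_eq_one (hT.norm_exp_smul_le_one t)
        (hT.norm_exp_smul_le_one (-t)) (hinv t)⟩
  · simpa using hasDerivAt_exp_smul_const T (0 : ℝ)
  · filter_upwards [Icc_mem_nhds (neg_lt_zero.mpr one_pos) one_pos] with t ht x
    exact ((hf t ht).2 x).le
end

section
/- Let X be a nonzero Banach space over 𝕜 (𝕜 = ℝ or ℂ) with the Daugavet property, and let T be a bounded linear operator on X of rank at most one. Then ‖T‖·𝕋 ⊆ closure(V(T)); that is, for every λ ∈ 𝕜 with |λ| = 1, the scalar λ‖T‖ belongs to the closure of the numerical range V(T). -/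
/-!
If `Re V(A) ≤ β`, testing `x - A x` against a norming functional of `x` gives
`(1 - β) ‖x‖ ≤ ‖(1 - A) x‖`; applied to `(1 + A) x` and combined with `(1 - A)(1 + A) = 1 - A²`,
this yields Lumer's bound `(1 - β) ‖1 + A‖ ≤ 1 + ‖A‖²`. For a rank-one `S`, every `tS` with `t > 0`
is rank-one, so `‖1 + tS‖ = 1 + t‖S‖`, and for small `t` the bound forces `sup Re V(S) = ‖S‖`.
As `V(S)` lies in the disc of radius `‖S‖`, points of `V(S)` with real part close to `‖S‖` are close
to `‖S‖`. Applying this to `S = conj λ • T` and rotating back by `λ` gives the theorem.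
-/

open RCLike ComplexConjugate
open scoped Pointwise

section Scalars

variable {𝕜 : Type*} [RCLike 𝕜]

theorem norm_ofReal_sub_sq_le {v : 𝕜} {r : ℝ} (hv : ‖v‖ ≤ r) :
    ‖(r : 𝕜) - v‖ ^ 2 ≤ 2 * r * (r - re v) := by
  rw [norm_sq_eq_def, map_sub, map_sub, ofReal_re, ofReal_im]
  nlinarith [norm_sq_eq_def (z := v), norm_nonneg v]

theorem ofReal_mem_closure_of_norm_le_of_exists_re_gt {s : Set 𝕜} {r : ℝ}
    (hs : ∀ v ∈ s, ‖v‖ ≤ r) (hre : ∀ ε > 0, ∃ v ∈ s, r - ε < re v) :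
    (r : 𝕜) ∈ closure s := by
  rw [Metric.mem_closure_iff]
  intro δ hδ
  obtain ⟨v₀, hv₀⟩ := hre 1 one_pos
  have hr : 0 ≤ r := (norm_nonneg v₀).trans (hs v₀ hv₀.1)
  obtain ⟨v, hv, hrv⟩ := hre (δ ^ 2 / (2 * r + 1)) (by positivity)
  refine ⟨v, hv, ?_⟩
  have hsq : ‖(r : 𝕜) - v‖ ^ 2 < δ ^ 2 :=
    calc ‖(r : 𝕜) - v‖ ^ 2 ≤ 2 * r * (r - re v) := norm_ofReal_sub_sq_le (hs v hv)
      _ ≤ 2 * r * (δ ^ 2 / (2 * r + 1)) := by gcongr; linarith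
      _ < δ ^ 2 := by
        rw [mul_div_assoc', div_lt_iff₀ (by positivity)]
        nlinarith
  rw [dist_eq_norm]
  exact lt_of_pow_lt_pow_left₀ 2 hδ.le hsq

end Scalars

section NumericalRange

variable {𝕜 X : Type*} [RCLike 𝕜] [NormedAddCommGroup X] [NormedSpace 𝕜 X]

theorem numericalRange_smul (c : 𝕜) (T : X →L[𝕜] X) :
    numericalRange 𝕜 (c • T) = c • numericalRange 𝕜 T := by
  ext v
  simp only [numericalRange, Set.mem_smul_set, Set.mem_ofPred_eq, smul_eq_mul]
  constructor
  · rintro ⟨x, f, hx, hf, hfx, rfl⟩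
    exact ⟨f (T x), ⟨x, f, hx, hf, hfx, rfl⟩, by simp⟩
  · rintro ⟨_, ⟨x, f, hx, hf, hfx, rfl⟩, rfl⟩
    exact ⟨x, f, hx, hf, hfx, by simp⟩

theorem norm_le_of_mem_numericalRange {T : X →L[𝕜] X} {v : 𝕜}
    (hv : v ∈ numericalRange 𝕜 T) : ‖v‖ ≤ ‖T‖ := by
  obtain ⟨x, f, hx, hf, -, rfl⟩ := hv
  simpa [hx, hf] using f.le_opNorm_of_le (T.le_opNorm_of_le hx.le)

theorem inv_norm_mul_apply_mem_numericalRange (T : X →L[𝕜] X) {x : X} (hx : x ≠ 0)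
    {f : X →L[𝕜] 𝕜} (hf : ‖f‖ = 1) (hfx : f x = ‖x‖) :
    (‖x‖ : 𝕜)⁻¹ * f (T x) ∈ numericalRange 𝕜 T := by
  have hx' : (‖x‖ : 𝕜) ≠ 0 := ofReal_ne_zero.mpr (norm_ne_zero_iff.mpr hx)
  refine ⟨(‖x‖ : 𝕜)⁻¹ • x, f, ?_, hf, ?_, by simp⟩
  · rw [norm_smul, norm_inv, norm_ofReal, abs_norm, inv_mul_cancel₀ (norm_ne_zero_iff.mpr hx)]
  · rw [map_smul, hfx, smul_eq_mul, inv_mul_cancel₀ hx']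

variable {A : X →L[𝕜] X} {β : ℝ}

theorem one_sub_mul_norm_le_norm_sub_apply (hβ : ∀ v ∈ numericalRange 𝕜 A, re v ≤ β) (x : X) :
    (1 - β) * ‖x‖ ≤ ‖x - A x‖ := by
  rcases eq_or_ne x 0 with rfl | hx
  · simp
  obtain ⟨f, hf, hfx⟩ := exists_dual_vector 𝕜 x (norm_ne_zero_iff.mpr hx)
  have hAx : re (f (A x)) ≤ β * ‖x‖ := by
    have := hβ _ (inv_norm_mul_apply_mem_numericalRange A hx hf hfx)
    rw [← ofReal_inv, re_ofReal_mul, inv_mul_le_iff₀ (norm_pos_iff.mpr hx)] at this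
    linarith
  calc (1 - β) * ‖x‖ ≤ re (f (x - A x)) := by
        rw [map_sub, map_sub, hfx, ofReal_re]; linarith
    _ ≤ ‖f (x - A x)‖ := re_le_norm _
    _ ≤ ‖x - A x‖ := by simpa [hf] using f.le_opNorm (x - A x)

theorem one_sub_mul_norm_one_add_le (hβ : ∀ v ∈ numericalRange 𝕜 A, re v ≤ β) :
    (1 - β) * ‖1 + A‖ ≤ 1 + ‖A‖ ^ 2 := by
  rcases le_or_gt (1 - β) 0 with hβ1 | hβ1
  · nlinarith [norm_nonneg (1 + A)]
  rw [← le_div_iff₀' hβ1]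
  refine ContinuousLinearMap.opNorm_le_bound _ (by positivity) fun x => ?_
  rw [div_mul_eq_mul_div, le_div_iff₀' hβ1]
  calc (1 - β) * ‖(1 + A) x‖ ≤ ‖(1 + A) x - A ((1 + A) x)‖ :=
        one_sub_mul_norm_le_norm_sub_apply hβ _
    _ = ‖x - (A * A) x‖ := by
        simp only [add_apply, one_apply_eq_self, map_add, mul_apply_eq_comp]
        congr 1; abel
    _ ≤ ‖x‖ + ‖A‖ ^ 2 * ‖x‖ := by
        refine (norm_sub_le _ _).trans (add_le_add_right ?_ _)
        calc ‖(A * A) x‖ ≤ ‖A * A‖ * ‖x‖ := (A * A).le_opNorm x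
          _ ≤ ‖A‖ ^ 2 * ‖x‖ := by gcongr; rw [sq]; exact norm_mul_le _ _
    _ = (1 + ‖A‖ ^ 2) * ‖x‖ := by ring

theorem exists_mem_numericalRange_norm_sub_lt_re {S : X →L[𝕜] X}
    (hS : ∀ t : ℝ, 0 < t → ‖1 + (t : 𝕜) • S‖ = 1 + t * ‖S‖) {ε : ℝ} (hε : 0 < ε) :
    ∃ v ∈ numericalRange 𝕜 S, ‖S‖ - ε < re v := by
  by_contra! hle
  set r := ‖S‖
  set t := ε / (2 * r ^ 2 + 1)
  have ht : 0 < t := by positivity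
  have hβ : ∀ v ∈ numericalRange 𝕜 ((t : 𝕜) • S), re v ≤ t * (r - ε) := by
    rw [numericalRange_smul]
    rintro _ ⟨v, hv, rfl⟩
    change re ((t : 𝕜) * v) ≤ _
    rw [re_ofReal_mul]
    exact mul_le_mul_of_nonneg_left (hle v hv) ht.le
  have hbound := one_sub_mul_norm_one_add_le hβ
  rw [hS t ht, norm_smul, norm_ofReal, abs_of_pos ht] at hbound
  -- `(1 - t(r - ε))(1 + tr) ≤ 1 + t²r²` forces `ε ≤ t(2r² - rε)`, too much for this small `t`
  have hε_le : ε ≤ t * (2 * r ^ 2 - r * ε) :=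
    le_of_mul_le_mul_left (by nlinarith [hbound]) ht
  have htr : t * (2 * r ^ 2 + 1) = ε := div_mul_cancel₀ _ (by positivity)
  nlinarith [mul_nonneg ht.le (mul_nonneg (norm_nonneg S) hε.le)]

theorem norm_mem_closure_numericalRange {S : X →L[𝕜] X}
    (hS : ∀ t : ℝ, 0 < t → ‖1 + (t : 𝕜) • S‖ = 1 + t * ‖S‖) :
    (‖S‖ : 𝕜) ∈ closure (numericalRange 𝕜 S) :=
  ofReal_mem_closure_of_norm_le_of_exists_re_gt (fun _ => norm_le_of_mem_numericalRange)
    fun _ => exists_mem_numericalRange_norm_sub_lt_re hS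

end NumericalRange

theorem smul_norm_mem_closure_numericalRange_of_daugavetProperty_general
    {𝕜 X : Type*} [RCLike 𝕜] [NormedAddCommGroup X] [NormedSpace 𝕜 X]
    (hD : ∀ S : X →L[𝕜] X, (∃ (g : X →L[𝕜] 𝕜) (y : X), S = g.smulRight y) →
      ‖(1 : X →L[𝕜] X) + S‖ = 1 + ‖S‖)
    (T : X →L[𝕜] X) (hT : ∃ (g : X →L[𝕜] 𝕜) (y : X), T = g.smulRight y) :
    ∀ lam : 𝕜, ‖lam‖ = 1 → lam * (‖T‖ : 𝕜) ∈ closure (numericalRange 𝕜 T) := by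
  intro lam hlam
  obtain ⟨g, y, rfl⟩ := hT
  set S := conj lam • g.smulRight y
  have hS : ∀ t : ℝ, 0 < t → ‖1 + (t : 𝕜) • S‖ = 1 + t * ‖S‖ := by
    intro t ht
    have hrank : (t : 𝕜) • S = ((t : 𝕜) • conj lam • g).smulRight y := by
      ext; simp [S, smul_smul]
    rw [hD _ ⟨_, y, hrank⟩, norm_smul, norm_ofReal, abs_of_pos ht]
  have hmaps : Set.MapsTo (lam * ·) (numericalRange 𝕜 S) (numericalRange 𝕜 (g.smulRight y)) := by
    rw [numericalRange_smul]
    rintro _ ⟨v, hv, rfl⟩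
    simpa [← mul_assoc, mul_conj, hlam] using hv
  have hnorm : ‖S‖ = ‖g.smulRight y‖ := by rw [norm_smul, norm_conj, hlam, one_mul]
  simpa [hnorm] using
    map_mem_closure (continuous_const_mul lam) (norm_mem_closure_numericalRange hS) hmaps

/-- If `X` has the Daugavet property (every operator of rank at most one satisfies the Daugavet
equation) and `T` has rank at most one, then `‖T‖ ⋅ 𝕋 ⊆ closure (V(T))`: for every modulus-one
scalar `λ`, `λ * ‖T‖` lies in the closure of the numerical range of `T`. -/
theorem smul_norm_mem_closure_numericalRange_of_daugavetProperty
    {𝕜 X : Type*} [RCLike 𝕜] [NormedAddCommGroup X] [NormedSpace 𝕜 X] [CompleteSpace X]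
    [Nontrivial X]
    (hD : ∀ S : X →L[𝕜] X, (∃ (g : X →L[𝕜] 𝕜) (y : X), S = g.smulRight y) →
      ‖(1 : X →L[𝕜] X) + S‖ = 1 + ‖S‖)
    (T : X →L[𝕜] X) (hT : ∃ (g : X →L[𝕜] 𝕜) (y : X), T = g.smulRight y) :
    ∀ lam : 𝕜, ‖lam‖ = 1 → lam * (‖T‖ : 𝕜) ∈ closure (numericalRange 𝕜 T) :=
  smul_norm_mem_closure_numericalRange_of_daugavetProperty_general hD T hT
end
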